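/- Let A be a nonempty finite type, let M be an A×A matrix with complex entries, and let k ≥ 1. Define the matrix T, indexed by words ε = (ε₀,…,ε_{k−1}) ∈ A^k (i.e. functions Fin k → A), by T_{ε′,ε} = M_{ε′_{k−1}, ε₀} if ε′_i = ε_{i+1} for all 0 ≤ i ≤ k−2, and T_{ε′,ε} = 0 otherwise. Then the k-th matrix power of T satisfies (T^k)_{ε′,ε} = ∏_{i=0}^{k−1} M_{ε′_i, ε_i}; in other words, T^k acts on the k-fold tensor power (ℂ^A)^{⊗k} as M applied in each tensor factor. -/

import Mathlib

/-!
Write `k = n + 1`. The hypotheses say that `T` is the matrix `shiftMatrix M`, which sends the basis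
vector `e_ε` to `∑ a, M a ε₀ • e_(ε₁, …, εₙ, a)`. Inductively, `T ^ m e_ε` is the sum over the
words `b` of length `m` of `(∏ j, M (b j) (ε j)) • e_w`, where `w` is `ε` with its first `m`
letters removed and `b` appended. For `m = k` nothing of `ε` survives, so `w = b`.
-/

section

open Finset Matrix

variable {A R : Type*}

/-- The word `(ε_m, …, ε_{k-1}, b_0, …, b_{m-1})`, for `m ≤ k`. -/
def shiftIn {k m : ℕ} (ε : Fin k → A) (b : Fin m → A) : Fin k → A :=
  fun i => if h : i + m < k then ε ⟨i + m, h⟩ else b ⟨i + m - k, by omega⟩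

theorem shiftIn_zero {k : ℕ} (ε : Fin k → A) (b : Fin 0 → A) : shiftIn ε b = ε := by
  ext i
  simp [shiftIn]

theorem shiftIn_self {k : ℕ} (ε b : Fin k → A) : shiftIn ε b = b := by
  ext i
  simp [shiftIn]

theorem shiftIn_apply_zero {n m : ℕ} (hm : m < n + 1) (ε : Fin (n + 1) → A) (b : Fin m → A) :
    shiftIn ε b 0 = ε ⟨m, hm⟩ := by
  simp [shiftIn, hm]

theorem snoc_tail_shiftIn {n m : ℕ} (ε : Fin (n + 1) → A) (b : Fin m → A) (a : A) :
    Fin.snoc (Fin.tail (shiftIn ε b)) a = shiftIn ε (Fin.snoc b a : Fin (m + 1) → A) := by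
  ext i
  induction i using Fin.lastCases with
  | last =>
    simp only [shiftIn, Fin.snoc_last, Fin.val_last]
    rw [dif_neg (by omega), Fin.snoc, dif_neg (by simp; omega)]
    rfl
  | cast i =>
    simp only [shiftIn, Fin.snoc_castSucc, Fin.tail, Fin.val_succ, Fin.val_castSucc]
    split_ifs with h h'
    · congr 2; omega
    · omega
    · omega
    · rw [Fin.snoc, dif_pos (by simp; omega)]
      simp only [cast_eq]
      congr 2; simp; omega

theorem init_eq_tail_iff {n : ℕ} (ε' ε : Fin (n + 1) → A) :
    Fin.init ε' = Fin.tail ε ↔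
      ∀ (i : ℕ) (hi : i + 1 < n + 1), ε' ⟨i, Nat.lt_of_succ_lt hi⟩ = ε ⟨i + 1, hi⟩ :=
  ⟨fun h i hi => congrFun h ⟨i, Nat.lt_of_succ_lt_succ hi⟩,
    fun h => funext fun i => h i (Nat.succ_lt_succ i.isLt)⟩

section shiftMatrix

variable [Fintype A] [DecidableEq A] [CommSemiring R]

def shiftMatrix {n : ℕ} (M : Matrix A A R) : Matrix (Fin (n + 1) → A) (Fin (n + 1) → A) R :=
  fun ε' ε => if Fin.init ε' = Fin.tail ε then M (ε' (Fin.last n)) (ε 0) else 0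

theorem shiftMatrix_mulVec_single {n : ℕ} (M : Matrix A A R) (ε : Fin (n + 1) → A) :
    shiftMatrix M *ᵥ Pi.single ε 1 =
      ∑ a, M a (ε 0) • Pi.single (Fin.snoc (Fin.tail ε) a : Fin (n + 1) → A) 1 := by
  ext ε'
  simp only [mulVec_single_one, col_apply, shiftMatrix, Finset.sum_apply, Pi.smul_apply,
    Pi.single_apply, smul_eq_mul, mul_ite, mul_one, mul_zero]
  conv_rhs => rw [← Fin.snoc_init_self ε']
  simp only [Fin.snoc_inj]
  by_cases h : Fin.init ε' = Fin.tail ε <;> simp [h]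

theorem shiftMatrix_pow_mulVec_single {n m : ℕ} (hm : m ≤ n + 1) (M : Matrix A A R)
    (ε : Fin (n + 1) → A) :
    shiftMatrix M ^ m *ᵥ Pi.single ε 1 =
      ∑ b : Fin m → A, (∏ j, M (b j) (ε (Fin.castLE hm j))) • Pi.single (shiftIn ε b) 1 := by
  induction m with
  | zero =>
    ext
    simp [shiftIn_zero, one_apply, Pi.single_apply]
  | succ m ih =>
    rw [pow_succ', ← mulVec_mulVec, ih (by omega), mulVec_sum]
    simp only [mulVec_smul, shiftMatrix_mulVec_single, smul_sum, smul_smul, snoc_tail_shiftIn,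
      shiftIn_apply_zero (Nat.lt_of_succ_le hm)]
    rw [← (Fin.snocEquiv fun _ => A).sum_comp, Fintype.sum_prod_type_right]
    refine sum_congr rfl fun b _ => sum_congr rfl fun a _ => ?_
    simp [Fin.snocEquiv, Fin.prod_univ_castSucc, mul_comm]
    rfl

theorem shiftMatrix_pow_self_apply {n : ℕ} (M : Matrix A A R) (ε' ε : Fin (n + 1) → A) :
    (shiftMatrix M ^ (n + 1)) ε' ε = ∏ i, M (ε' i) (ε i) := by
  have h := congrFun (shiftMatrix_pow_mulVec_single le_rfl M ε) ε'
  simp only [mulVec_single_one, col_apply, shiftIn_self] at h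
  simpa [Finset.sum_apply, Pi.single_apply] using h

end shiftMatrix

end

theorem stmt_0 {A : Type*} [Fintype A] [DecidableEq A] (M : Matrix A A ℂ)
    (k : ℕ) (hk : 0 < k) (T : Matrix (Fin k → A) (Fin k → A) ℂ)
    (hT₁ : ∀ ε' ε : Fin k → A,
      (∀ (i : ℕ) (hi : i + 1 < k), ε' ⟨i, Nat.lt_of_succ_lt hi⟩ = ε ⟨i + 1, hi⟩) →
      T ε' ε = M (ε' ⟨k - 1, Nat.sub_lt hk Nat.one_pos⟩) (ε ⟨0, hk⟩))
    (hT₂ : ∀ ε' ε : Fin k → A,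
      ¬ (∀ (i : ℕ) (hi : i + 1 < k), ε' ⟨i, Nat.lt_of_succ_lt hi⟩ = ε ⟨i + 1, hi⟩) →
      T ε' ε = 0) :
    ∀ ε' ε : Fin k → A, (T ^ k) ε' ε = ∏ i : Fin k, M (ε' i) (ε i) := by
  obtain ⟨n, rfl⟩ := Nat.exists_eq_add_one_of_ne_zero hk.ne'
  have hT : T = shiftMatrix M := by
    ext ε' ε
    by_cases h : Fin.init ε' = Fin.tail ε
    · rw [hT₁ ε' ε ((init_eq_tail_iff ε' ε).1 h), shiftMatrix, if_pos h]
      rfl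
    · rw [hT₂ ε' ε (mt (init_eq_tail_iff ε' ε).2 h), shiftMatrix, if_neg h]
  intro ε' ε
  rw [hT, shiftMatrix_pow_self_apply]
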